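/- arXiv:2506.01081 — 2 statements merged into one kernel-verified Lean document; each statement's English description precedes it below -/
import Mathlib

section
/- Assume M = U Λ U⁻¹ is diagonalizable with U ∈ ℝ^{n×n} invertible and Λ real diagonal, all eigenvalues of M lie in an interval [a, b] where a and b have the same sign and 0, 1 ∉ [a, b], and m ≤ k. Starting from u₀, let u_j = q(u_{j−1}) for j = 1, …, k, and let u_{k+1} be produced by a single NGMRES(m) step from u_{k−m}, …, u_k. Then ‖r_{k+1}‖ ≤ ε(a, b, m+1) · κ₂(U) · ‖M r_k‖. -/
open Matrix Polynomial Set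

noncomputable section

/-- Matrix–vector product, landing in Euclidean space. -/
def mulVecE {n : ℕ} (M : Matrix (Fin n) (Fin n) ℝ) (v : EuclideanSpace ℝ (Fin n)) :
    EuclideanSpace ℝ (Fin n) :=
  WithLp.toLp 2 (M.mulVec v)

/-- Residual `r(u) = A u - b`. -/
def res {n : ℕ} (A : Matrix (Fin n) (Fin n) ℝ) (b u : EuclideanSpace ℝ (Fin n)) :
    EuclideanSpace ℝ (Fin n) :=
  mulVecE A u - b

/-- Richardson fixed-point map `q(u) = (I - A) u + b = M u + b` with `M = I - A`. -/
def fp {n : ℕ} (A : Matrix (Fin n) (Fin n) ℝ) (b u : EuclideanSpace ℝ (Fin n)) :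
    EuclideanSpace ℝ (Fin n) :=
  mulVecE (1 - A) u + b

/-- The NGMRES(m) least-squares objective at step `k`:
`β ↦ ‖r(q(u_k)) + Σ_{i=0}^m β_i (r(q(u_k)) - r(u_{k-i}))‖`. -/
def ngObj {n : ℕ} (A : Matrix (Fin n) (Fin n) ℝ) (b : EuclideanSpace ℝ (Fin n))
    (m : ℕ) (prev : ℕ → EuclideanSpace ℝ (Fin n)) (k : ℕ) (β : Fin (m+1) → ℝ) : ℝ :=
  ‖res A b (fp A b (prev k)) +
    ∑ i : Fin (m+1), β i • (res A b (fp A b (prev k)) - res A b (prev (k - (i : ℕ))))‖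

/-- `next` is produced from `prev (k-m), …, prev k` by a single NGMRES(m) step:
`next = q(u_k) + Σ_{i=0}^m β_i (q(u_k) - u_{k-i})` where `β` minimizes the
least-squares objective `ngObj`. -/
def NGMRESStep {n : ℕ} (A : Matrix (Fin n) (Fin n) ℝ) (b : EuclideanSpace ℝ (Fin n))
    (m : ℕ) (prev : ℕ → EuclideanSpace ℝ (Fin n)) (k : ℕ)
    (next : EuclideanSpace ℝ (Fin n)) : Prop :=
  ∃ β : Fin (m+1) → ℝ,
    (∀ γ : Fin (m+1) → ℝ, ngObj A b m prev k β ≤ ngObj A b m prev k γ) ∧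
    next = fp A b (prev k) +
      ∑ i : Fin (m+1), β i • (fp A b (prev k) - prev (k - (i : ℕ)))

/-- The spectral (ℓ²-operator) norm of a matrix. -/
def opNorm {n : ℕ} (M : Matrix (Fin n) (Fin n) ℝ) : ℝ :=
  ‖(Matrix.toEuclideanCLM (𝕜 := ℝ) M : EuclideanSpace ℝ (Fin n) →L[ℝ] EuclideanSpace ℝ (Fin n))‖

/-- The 2-norm condition number `κ₂(U) = ‖U‖ ‖U⁻¹‖`. -/
def condNum {n : ℕ} (U : Matrix (Fin n) (Fin n) ℝ) : ℝ :=
  opNorm U * opNorm U⁻¹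

/-- `ε(a,b,s)`: minimum over real polynomials `p` of degree at most `s` with `p(1) = 1`
of `max_{t ∈ [1/b, 1/a]} |p(t)|`. -/
def eps (a b : ℝ) (s : ℕ) : ℝ :=
  sInf {t : ℝ | ∃ p : Polynomial ℝ, p.natDegree ≤ s ∧ p.eval 1 = 1 ∧
    t = sSup ((fun x => |p.eval x|) '' Set.Icc (1/b) (1/a))}

/-- `χ(s)`: minimum over real polynomials `p` of degree at most `s` with `p(1) = 1`
of `max_{λ ∈ Σ(M)} |p(λ)|`, where `Σ(M)` is the set of eigenvalues of `M`. -/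
def chiSp {n : ℕ} (M : Matrix (Fin n) (Fin n) ℝ) (s : ℕ) : ℝ :=
  sInf {t : ℝ | ∃ p : Polynomial ℝ, p.natDegree ≤ s ∧ p.eval 1 = 1 ∧
    t = sSup ((fun x => |p.eval x|) '' spectrum ℝ M)}

/-- The Krylov subspace `K_k(A, r) = span{r, Ar, …, A^{k-1} r}`. -/
def Krylov {n : ℕ} (A : Matrix (Fin n) (Fin n) ℝ) (r : EuclideanSpace ℝ (Fin n)) (k : ℕ) :
    Submodule ℝ (EuclideanSpace ℝ (Fin n)) :=
  Submodule.span ℝ (Set.range fun i : Fin k => mulVecE (A ^ (i : ℕ)) r)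

/-- The matrix `S_k = [u_{k-m+1}-u_{k-m}, …, u_k-u_{k-1}, q(u_k)-u_k] ∈ ℝ^{n×(m+1)}`. -/
def Smat {n : ℕ} (A : Matrix (Fin n) (Fin n) ℝ) (b : EuclideanSpace ℝ (Fin n))
    (prev : ℕ → EuclideanSpace ℝ (Fin n)) (k m : ℕ) :
    Matrix (Fin n) (Fin (m+1)) ℝ :=
  Matrix.of fun r c =>
    if (c : ℕ) < m then prev (k - m + c + 1) r - prev (k - m + c) r
    else fp A b (prev k) r - prev k r

/-- `u` is the sequence of aNGMRES(m, p) iterates (with `m = ⊤` giving aNGMRES(∞, p)):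
if `p ∤ k` then `u_k = q(u_{k-1})`, and if `p ∣ k` then `u_k` is produced by one
NGMRES(min(m, k-1)) step from `u_{k-1-m_k}, …, u_{k-1}`. -/
def aNGMRES {n : ℕ} (A : Matrix (Fin n) (Fin n) ℝ) (b : EuclideanSpace ℝ (Fin n))
    (m : ℕ∞) (p : ℕ) (u : ℕ → EuclideanSpace ℝ (Fin n)) : Prop :=
  ∀ k, 1 ≤ k →
    (¬ p ∣ k → u k = fp A b (u (k-1))) ∧
    (p ∣ k → NGMRESStep A b (min m ((k : ℕ∞) - 1)).toNat u (k-1) (u k))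

/-!
Since `u_j = q(u_{j-1})` for `j ≤ k`, the residuals satisfy `r_j = M r_{j-1}`, and `M` is
invertible because its eigenvalues avoid `0`; hence `r_{k-i} = M^{-(i+1)} s` for `i ≤ m`, where
`s = M r_k = r(q(u_k))`. For a polynomial `p` of degree at most `m + 1` with `p(1) = 1`, the
choice `β_i = -p_{i+1}` turns the NGMRES objective into `‖p(M⁻¹) s‖`, so by minimality
`‖r_{k+1}‖ ≤ ‖p(M⁻¹) s‖`. Finally `p(M⁻¹) = U p(Λ⁻¹) U⁻¹` and the eigenvalues of `Λ⁻¹` lie in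
`[1/c, 1/a]` (the paper's interval `[a, b]` is `Icc a c` here), which gives
`‖p(M⁻¹)‖ ≤ κ₂(U) max_{[1/c, 1/a]} |p|`; take the infimum over `p`.
-/

open scoped Matrix.Norms.L2Operator

namespace Polynomial

theorem aeval_eq_one_add_sum_of_eval_one {R S : Type*} [CommRing R] [Ring S] [Algebra R S]
    {m : ℕ} {p : R[X]} (hdeg : p.natDegree ≤ m + 1) (hp1 : p.eval 1 = 1) (x : S) :
    aeval x p = 1 + ∑ i : Fin (m + 1), (-p.coeff ((i : ℕ) + 1)) • (1 - x ^ ((i : ℕ) + 1)) := by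
  have hlt : p.natDegree < m + 2 := by omega
  have hcoeff0 := eval_eq_sum_range' hlt (1 : R)
  rw [hp1, Finset.sum_range_succ'] at hcoeff0
  simp only [one_pow, mul_one, pow_zero] at hcoeff0
  rw [aeval_eq_sum_range' hlt, Finset.sum_range_succ', pow_zero,
    show p.coeff 0 = 1 - ∑ i ∈ Finset.range (m + 1), p.coeff (i + 1) by linear_combination -hcoeff0,
    Fin.sum_univ_eq_sum_range (fun i => (-p.coeff (i + 1)) • (1 - x ^ (i + 1)))]
  simp only [sub_smul, smul_sub, Finset.sum_smul, Finset.sum_sub_distrib, neg_smul,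
    Finset.sum_neg_distrib, one_smul]
  abel

theorem aeval_units_conj {R S : Type*} [CommSemiring R] [Semiring S] [Algebra R S]
    (u : Sˣ) (x : S) (p : R[X]) :
    aeval (↑u * x * ↑u⁻¹) p = ↑u * aeval x p * ↑u⁻¹ := by
  simp only [aeval_eq_sum_range, Units.conj_pow, Finset.mul_sum, Finset.sum_mul, mul_smul_comm,
    smul_mul_assoc]

end Polynomial

namespace Matrix

variable {ι : Type*} [Fintype ι] [DecidableEq ι]

theorem aeval_diagonal {R : Type*} [CommSemiring R] (e : ι → R) (p : R[X]) :
    aeval (diagonal e) p = diagonal fun j => p.eval (e j) := by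
  simpa [aeval_pi_apply] using aeval_algHom_apply (diagonalAlgHom R (n := ι)) e p

theorem aeval_conj_diagonal {R : Type*} [CommRing R] {U : Matrix ι ι R} (hU : IsUnit U)
    (e : ι → R) (p : R[X]) :
    aeval (U * diagonal e * U⁻¹) p = U * diagonal (fun j => p.eval (e j)) * U⁻¹ := by
  simpa [coe_units_inv, aeval_diagonal] using aeval_units_conj hU.unit (diagonal e) p

theorem conj_mul_conj {R : Type*} [CommRing R] {U : Matrix ι ι R} (hU : IsUnit U)
    (X Y : Matrix ι ι R) : U * X * U⁻¹ * (U * Y * U⁻¹) = U * (X * Y) * U⁻¹ := by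
  have hdet : IsUnit U.det := (isUnit_iff_isUnit_det U).mp hU
  simp only [Matrix.mul_assoc, nonsing_inv_mul_cancel_left _ _ hdet]

theorem l2_opNorm_conj_diagonal_le {𝕜 : Type*} [RCLike 𝕜] (U : Matrix ι ι 𝕜) {e : ι → 𝕜}
    {C : ℝ} (hC : 0 ≤ C) (he : ∀ j, ‖e j‖ ≤ C) :
    ‖U * diagonal e * U⁻¹‖ ≤ C * (‖U‖ * ‖U⁻¹‖) := by
  have hdiag : ‖diagonal e‖ ≤ C := by
    rw [l2_opNorm_diagonal]
    exact (pi_norm_le_iff_of_nonneg hC).mpr he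
  calc ‖U * diagonal e * U⁻¹‖ ≤ ‖U‖ * ‖diagonal e‖ * ‖U⁻¹‖ := by
        grw [l2_opNorm_mul, l2_opNorm_mul]
    _ ≤ ‖U‖ * C * ‖U⁻¹‖ := by gcongr
    _ = C * (‖U‖ * ‖U⁻¹‖) := by ring

end Matrix

theorem ne_zero_of_mem_Icc_of_mul_pos {a c x : ℝ} (hac : 0 < a * c) (hx : x ∈ Icc a c) :
    x ≠ 0 := by
  rintro rfl
  nlinarith [hx.1, hx.2]

theorem inv_mem_Icc_inv_of_mul_pos {a c x : ℝ} (hac : 0 < a * c) (hx : x ∈ Icc a c) :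
    x⁻¹ ∈ Icc c⁻¹ a⁻¹ := by
  rcases mul_pos_iff.mp hac with ⟨ha, hc⟩ | ⟨ha, hc⟩
  · exact ⟨inv_anti₀ (ha.trans_le hx.1) hx.2, inv_anti₀ ha hx.1⟩
  · have hx0 : x < 0 := hx.2.trans_lt hc
    exact ⟨(inv_le_inv_of_neg hc hx0).mpr hx.2, (inv_le_inv_of_neg hx0 ha).mpr hx.1⟩

theorem Real.le_sInf_mul {S : Set ℝ} (hS : S.Nonempty) {x K : ℝ} (hK : 0 ≤ K)
    (h : ∀ t ∈ S, x ≤ t * K) : x ≤ sInf S * K := by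
  rw [mul_comm, ← smul_eq_mul, ← Real.sInf_smul_of_nonneg hK]
  refine le_csInf hS.smul_set ?_
  rintro _ ⟨t, ht, rfl⟩
  simpa [mul_comm] using h t ht

section Richardson

variable {n : ℕ} {A : Matrix (Fin n) (Fin n) ℝ} {b : EuclideanSpace ℝ (Fin n)}

theorem mulVecE_eq_toEuclideanCLM (B : Matrix (Fin n) (Fin n) ℝ) (v : EuclideanSpace ℝ (Fin n)) :
    mulVecE B v = Matrix.toEuclideanCLM (𝕜 := ℝ) B v :=
  rfl

theorem opNorm_eq_norm (B : Matrix (Fin n) (Fin n) ℝ) : opNorm B = ‖B‖ :=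
  rfl

theorem norm_mulVecE_le (B : Matrix (Fin n) (Fin n) ℝ) (v : EuclideanSpace ℝ (Fin n)) :
    ‖mulVecE B v‖ ≤ ‖B‖ * ‖v‖ :=
  (Matrix.toEuclideanCLM (𝕜 := ℝ) B).le_opNorm v

theorem mulVecE_mul (B C : Matrix (Fin n) (Fin n) ℝ) (v : EuclideanSpace ℝ (Fin n)) :
    mulVecE (B * C) v = mulVecE B (mulVecE C v) := by
  simp [mulVecE_eq_toEuclideanCLM]

theorem res_fp (v : EuclideanSpace ℝ (Fin n)) :
    res A b (fp A b v) = mulVecE (1 - A) (res A b v) := by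
  simp only [res, fp, mulVecE_eq_toEuclideanCLM, map_add, map_sub, map_one, _root_.sub_apply,
    one_apply_eq_self]
  abel

theorem res_add_sum_smul_sub {ι : Type*} [Fintype ι] (β : ι → ℝ)
    (x : EuclideanSpace ℝ (Fin n)) (y : ι → EuclideanSpace ℝ (Fin n)) :
    res A b (x + ∑ i, β i • (x - y i)) = res A b x + ∑ i, β i • (res A b x - res A b (y i)) := by
  simp only [res, mulVecE_eq_toEuclideanCLM, map_add, map_sum, map_smul, map_sub,
    sub_sub_sub_cancel_right]
  abel

end Richardson

section NGMRES

variable {n m k : ℕ} {A N : Matrix (Fin n) (Fin n) ℝ} {b : EuclideanSpace ℝ (Fin n)}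
  {u : ℕ → EuclideanSpace ℝ (Fin n)}

theorem res_sub_eq_mulVecE_pow (hN : N * (1 - A) = 1)
    (hfp : ∀ j, 1 ≤ j → j ≤ k → u j = fp A b (u (j - 1))) {i : ℕ} (hi : i ≤ k) :
    res A b (u (k - i)) = mulVecE (N ^ i) (res A b (u k)) := by
  induction i with
  | zero => simp [mulVecE_eq_toEuclideanCLM]
  | succ i ih =>
    have hu : u (k - i) = fp A b (u (k - (i + 1))) := by
      rw [hfp (k - i) (by omega) (by omega), Nat.sub_sub]
    rw [pow_succ', mulVecE_mul, ← ih (by omega), hu, res_fp, ← mulVecE_mul, hN]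
    simp [mulVecE_eq_toEuclideanCLM]

theorem NGMRESStep.norm_res_le_ngObj {next : EuclideanSpace ℝ (Fin n)}
    (hstep : NGMRESStep A b m u k next) (γ : Fin (m + 1) → ℝ) :
    ‖res A b next‖ ≤ ngObj A b m u k γ := by
  obtain ⟨β, hmin, rfl⟩ := hstep
  rw [res_add_sum_smul_sub β _ fun i => u (k - i)]
  exact hmin γ

theorem ngObj_neg_coeff_eq (hN : N * (1 - A) = 1)
    (hfp : ∀ j, 1 ≤ j → j ≤ k → u j = fp A b (u (j - 1))) (hmk : m ≤ k) {p : ℝ[X]}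
    (hdeg : p.natDegree ≤ m + 1) (hp1 : p.eval 1 = 1) :
    ngObj A b m u k (fun i => -p.coeff ((i : ℕ) + 1)) =
      ‖mulVecE (aeval N p) (mulVecE (1 - A) (res A b (u k)))‖ := by
  have hprev (i : Fin (m + 1)) :
      res A b (u (k - i)) = mulVecE (N ^ ((i : ℕ) + 1)) (mulVecE (1 - A) (res A b (u k))) := by
    rw [res_sub_eq_mulVecE_pow hN hfp (by omega), ← mulVecE_mul, pow_succ, mul_assoc, hN,
      mul_one]
  rw [ngObj, res_fp, aeval_eq_one_add_sum_of_eval_one hdeg hp1]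
  generalize mulVecE (1 - A) (res A b (u k)) = s at hprev ⊢
  simp only [hprev, mulVecE_eq_toEuclideanCLM, map_add, map_sum, map_smul, map_sub, map_one,
    _root_.add_apply, _root_.sum_apply, _root_.smul_apply, _root_.sub_apply, one_apply_eq_self]

end NGMRES

theorem stmt_2_general {n m k : ℕ} (A U : Matrix (Fin n) (Fin n) ℝ) (d : Fin n → ℝ)
    (hU : IsUnit U)
    (hM : (1 : Matrix (Fin n) (Fin n) ℝ) - A = U * Matrix.diagonal d * U⁻¹)
    (a c : ℝ) (hsign : 0 < a * c)
    (hd : ∀ i, d i ∈ Set.Icc a c)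
    (b : EuclideanSpace ℝ (Fin n)) (u : ℕ → EuclideanSpace ℝ (Fin n))
    (hfp : ∀ j, 1 ≤ j → j ≤ k → u j = fp A b (u (j-1)))
    (hmk : m ≤ k) (next : EuclideanSpace ℝ (Fin n))
    (hstep : NGMRESStep A b m u k next) :
    ‖res A b next‖ ≤ eps a c (m+1) * condNum U * ‖mulVecE (1 - A) (res A b (u k))‖ := by
  set s := mulVecE (1 - A) (res A b (u k))
  set N := U * diagonal (fun i => (d i)⁻¹) * U⁻¹
  have hN : N * (1 - A) = 1 := by
    rw [hM, conj_mul_conj hU, diagonal_mul_diagonal]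
    simp only [inv_mul_cancel₀ (ne_zero_of_mem_Icc_of_mul_pos hsign (hd _)), diagonal_one,
      Matrix.mul_one, mul_nonsing_inv _ ((isUnit_iff_isUnit_det U).mp hU)]
  rw [mul_assoc, eps]
  refine Real.le_sInf_mul ?_
    (mul_nonneg (mul_nonneg (norm_nonneg _) (norm_nonneg _)) (norm_nonneg _)) ?_
  · exact ⟨_, 1, by simp, by simp, rfl⟩
  rintro _ ⟨p, hdeg, hp1, rfl⟩
  set E := (fun x => |p.eval x|) '' Icc (1 / c) (1 / a)
  have hE : ∀ j, ‖p.eval (d j)⁻¹‖ ≤ sSup E := fun j =>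
    le_csSup (isCompact_Icc.image p.continuous.abs).bddAbove <| mem_image_of_mem _ <| by
      simpa only [one_div] using inv_mem_Icc_inv_of_mul_pos hsign (hd j)
  have hE0 : 0 ≤ sSup E := Real.sSup_nonneg (by rintro _ ⟨x, -, rfl⟩; exact abs_nonneg _)
  calc ‖res A b next‖ ≤ ngObj A b m u k _ := hstep.norm_res_le_ngObj _
    _ = ‖mulVecE (aeval N p) s‖ := ngObj_neg_coeff_eq hN hfp hmk hdeg hp1
    _ ≤ ‖aeval N p‖ * ‖s‖ := norm_mulVecE_le _ _
    _ ≤ sSup E * (condNum U * ‖s‖) := by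
      rw [aeval_conj_diagonal hU, condNum, opNorm_eq_norm, opNorm_eq_norm, ← mul_assoc]
      gcongr
      exact l2_opNorm_conj_diagonal_le U hE0 hE

/-- one-step NGMRES(m) bound in the diagonalizable case,
`‖r_{k+1}‖ ≤ ε(a, b, m+1) · κ₂(U) · ‖M r_k‖`. -/
theorem stmt_2 {n m k : ℕ} (A U : Matrix (Fin n) (Fin n) ℝ) (d : Fin n → ℝ)
    (hA : IsUnit A) (hU : IsUnit U)
    (hM : (1 : Matrix (Fin n) (Fin n) ℝ) - A = U * Matrix.diagonal d * U⁻¹)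
    (a c : ℝ) (hac : a < c) (hsign : 0 < a * c)
    (h0 : (0 : ℝ) ∉ Set.Icc a c) (h1 : (1 : ℝ) ∉ Set.Icc a c)
    (hd : ∀ i, d i ∈ Set.Icc a c)
    (b : EuclideanSpace ℝ (Fin n)) (u : ℕ → EuclideanSpace ℝ (Fin n))
    (hfp : ∀ j, 1 ≤ j → j ≤ k → u j = fp A b (u (j-1)))
    (hmk : m ≤ k) (next : EuclideanSpace ℝ (Fin n))
    (hstep : NGMRESStep A b m u k next) :
    ‖res A b next‖ ≤ eps a c (m+1) * condNum U * ‖mulVecE (1 - A) (res A b (u k))‖ :=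
  stmt_2_general A U d hU hM a c hsign hd b u hfp hmk next hstep

end
end

section
/- Let (u_k) be the aNGMRES(∞, p) iterates from u₀ and (u_k^G) the full GMRES iterates from the same u₀. Then u_{jp} = u_{jp}^G for all j = 1, …, j*, whenever j* p ≤ ν(A, r₀) and j* p ≤ η^G. -/
/-!
Write `K_k` for the Krylov spaces of `r₀`. Below the grade `ν` they strictly increase, so `A`
maps `K_{k+1} \ K_k` into `K_{k+2} \ K_{k+1}`. By induction on `k ≤ min(ν, η^G)`, the
differences `u_j - u₀` (`j ≤ k`) span `K_k` and `r_k ∈ K_{k+1} \ K_k`. A Richardson step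
adds the direction `-r_k`. An NGMRES step with full history searches the affine span of
`u₀, …, u_k, q(u_k)`, which is therefore `u₀ + K_{k+1}`; the residual minimizer over it is
unique (`A` invertible, Euclidean norm strictly convex), so the step reproduces `u^G_{k+1}`,
which lies outside `u₀ + K_k` because GMRES has not stagnated yet.
-/

open Matrix Polynomial Set

noncomputable section

section Krylov

open Submodule

variable {K V : Type*} [Field K] [AddCommGroup V] [Module K V]

def krylov (f : Module.End K V) (r : V) (k : ℕ) : Submodule K V :=
  span K ((fun i => (f ^ i) r) '' Iio k)

variable {f : Module.End K V} {r : V}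

lemma pow_apply_mem_krylov {i k : ℕ} (h : i < k) : (f ^ i) r ∈ krylov f r k :=
  subset_span ⟨i, h, rfl⟩

lemma krylov_zero : krylov f r 0 = ⊥ := by
  simp [krylov]

lemma krylov_succ (k : ℕ) :
    krylov f r (k + 1) = span K (insert ((f ^ k) r) ((fun i => (f ^ i) r) '' Iio k)) := by
  rw [krylov, Iio_add_one_eq_Iic, ← Iio_insert, image_insert_eq]

lemma krylov_mono : Monotone (krylov f r) := fun _ _ h =>
  span_mono (image_mono (Iio_subset_Iio h))

lemma apply_mem_krylov_succ {k : ℕ} {v : V} (hv : v ∈ krylov f r k) :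
    f v ∈ krylov f r (k + 1) := by
  suffices krylov f r k ≤ (krylov f r (k + 1)).comap f from this hv
  rw [krylov, span_le]
  rintro _ ⟨i, hi, rfl⟩
  simpa [← Module.End.mul_apply, ← pow_succ'] using
    pow_apply_mem_krylov (f := f) (r := r) (Nat.succ_lt_succ hi)

lemma krylov_succ_eq_sup {k : ℕ} {v : V} (hv : v ∈ krylov f r (k + 1))
    (hv' : v ∉ krylov f r k) : krylov f r (k + 1) = krylov f r k ⊔ K ∙ v := by
  rw [krylov_succ] at hv ⊢
  rw [krylov, sup_comm, ← span_insert]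
  have hsub : ∀ {x : V} {s : Set V}, s ⊆ span K (insert x s) := fun h =>
    subset_span (mem_insert_of_mem _ h)
  apply le_antisymm
  · exact span_le.2 (insert_subset (mem_span_insert_exchange hv hv') hsub)
  · exact span_le.2 (insert_subset hv hsub)

lemma apply_notMem_krylov_succ {k : ℕ} (hk : (f ^ (k + 1)) r ∉ krylov f r (k + 1)) {v : V}
    (hv : v ∈ krylov f r (k + 1)) (hv' : v ∉ krylov f r k) : f v ∉ krylov f r (k + 1) := by
  rw [krylov_succ, mem_span_insert] at hv
  obtain ⟨a, z, hz, rfl⟩ := hv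
  have ha : a ≠ 0 := by
    rintro rfl
    simp_all [krylov]
  intro hfv
  apply hk
  have hpow : (f ^ (k + 1)) r = a⁻¹ • (f (a • (f ^ k) r + z) - f z) := by
    simp [smul_smul, ha, pow_succ', Module.End.mul_apply]
  rw [hpow]
  exact smul_mem _ _ (sub_mem hfv (apply_mem_krylov_succ hz))

lemma pow_apply_notMem_krylov {ν : ℕ} (hν : Module.finrank K (krylov f r ν) = ν) {l : ℕ}
    (hl : l < ν) : (f ^ l) r ∉ krylov f r l := by
  set g : ℕ → V := fun i => (f ^ i) r
  have hind : LinearIndependent K (fun i : Fin ν => g i) := by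
    rw [linearIndependent_iff_card_eq_finrank_span, Fintype.card_fin, range_comp' g,
      Fin.range_val]
    exact hν.symm
  have himage : (fun i : Fin ν => g i) '' {i | (i : ℕ) < l} = g '' Iio l := by
    ext x
    constructor
    · rintro ⟨i, hi, rfl⟩
      exact ⟨i, hi, rfl⟩
    · rintro ⟨i, hi, rfl⟩
      exact ⟨⟨i, hi.trans hl⟩, hi, rfl⟩
  have := hind.notMem_span_image (s := {i | (i : ℕ) < l}) (x := ⟨l, hl⟩) (lt_irrefl l)
  rwa [himage] at this

end Krylov

lemma vectorSpan_insert_of_mem {k V P : Type*} [Ring k] [AddCommGroup V] [Module k V]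
    [AddTorsor V P] {s : Set P} {x₀ : P} (hx₀ : x₀ ∈ s) (x : P) :
    vectorSpan k (insert x s) = k ∙ (x -ᵥ x₀) ⊔ vectorSpan k s := by
  rw [vectorSpan_eq_span_vsub_set_right k (mem_insert_of_mem x hx₀),
    vectorSpan_eq_span_vsub_set_right k hx₀, image_insert_eq, Submodule.span_insert]

lemma eq_of_norm_le_norm_midpoint {F : Type*} [NormedAddCommGroup F] [NormedSpace ℝ F]
    [StrictConvexSpace ℝ F] {x y : F} (hx : ‖x‖ ≤ ‖(1 / 2 : ℝ) • (x + y)‖)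
    (hy : ‖y‖ ≤ ‖(1 / 2 : ℝ) • (x + y)‖) : x = y := by
  have hmid : ‖(1 / 2 : ℝ) • (x + y)‖ ≤ (‖x‖ + ‖y‖) / 2 := by
    rw [norm_smul, Real.norm_of_nonneg (by norm_num)]
    linarith [norm_add_le x y]
  have hxy : ‖x‖ = ‖y‖ := by linarith
  by_contra hne
  linarith [(norm_midpoint_lt_iff hxy).2 hne]

section Residual

open Submodule AffineSubspace

variable {n : ℕ} {A : Matrix (Fin n) (Fin n) ℝ} {b : EuclideanSpace ℝ (Fin n)}

lemma mulVecE_eq_toEuclideanLin (A : Matrix (Fin n) (Fin n) ℝ) (v : EuclideanSpace ℝ (Fin n)) :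
    mulVecE A v = toEuclideanLin A v :=
  rfl

lemma Krylov_eq_krylov (A : Matrix (Fin n) (Fin n) ℝ) (r : EuclideanSpace ℝ (Fin n)) (k : ℕ) :
    Krylov A r k = krylov (toEuclideanLin A) r k := by
  rw [Krylov, krylov, ← Fin.range_val, ← range_comp]
  congr 2
  ext i : 1
  exact congrFun (congrArg DFunLike.coe (toLpLin_pow 2 A i)) r

lemma injective_toEuclideanLin_of_isUnit (hA : IsUnit A) :
    Function.Injective (toEuclideanLin A) :=
  ((Module.End.isUnit_iff _).1 (hA.map (toLpLinAlgEquiv 2))).1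

lemma res_add (x v : EuclideanSpace ℝ (Fin n)) :
    res A b (x + v) = res A b x + toEuclideanLin A v := by
  simp only [res, mulVecE_eq_toEuclideanLin, map_add]
  abel

lemma res_sub_res (x y : EuclideanSpace ℝ (Fin n)) :
    res A b x - res A b y = toEuclideanLin A (x - y) := by
  simp only [res, mulVecE_eq_toEuclideanLin, map_sub]
  abel

lemma fp_eq_sub_res (x : EuclideanSpace ℝ (Fin n)) : fp A b x = x - res A b x := by
  simp only [fp, res, mulVecE_eq_toEuclideanLin, map_sub, LinearMap.sub_apply, toLpLin_one,
    LinearMap.id_apply]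
  abel

lemma res_midpoint (x y : EuclideanSpace ℝ (Fin n)) :
    res A b ((1 / 2 : ℝ) • (x + y)) = (1 / 2 : ℝ) • (res A b x + res A b y) := by
  simp only [res, mulVecE_eq_toEuclideanLin, map_smul, map_add]
  module

variable (A b) in
def IsResMinOn (s : Set (EuclideanSpace ℝ (Fin n))) (x : EuclideanSpace ℝ (Fin n)) : Prop :=
  x ∈ s ∧ IsMinOn (fun y => ‖res A b y‖) s x

lemma IsResMinOn.eq (hA : IsUnit A) {s : Set (EuclideanSpace ℝ (Fin n))} (hs : Convex ℝ s)
    {x y : EuclideanSpace ℝ (Fin n)} (hx : IsResMinOn A b s x) (hy : IsResMinOn A b s y) :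
    x = y := by
  have hmid : (1 / 2 : ℝ) • (x + y) ∈ s := by
    simpa [smul_add] using hs hx.1 hy.1 (by norm_num) (by norm_num) (by norm_num)
  have hres : res A b x = res A b y := eq_of_norm_le_norm_midpoint
    (by rw [← res_midpoint]; exact hx.2 hmid) (by rw [← res_midpoint]; exact hy.2 hmid)
  apply injective_toEuclideanLin_of_isUnit hA
  rw [← sub_eq_zero, ← map_sub, ← res_sub_res, hres, sub_self]

lemma isResMinOn_mk'_iff {x₀ x : EuclideanSpace ℝ (Fin n)}
    {W : Submodule ℝ (EuclideanSpace ℝ (Fin n))} :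
    IsResMinOn A b (mk' x₀ W) x ↔ x - x₀ ∈ W ∧ ∀ w ∈ W, ‖res A b x‖ ≤ ‖res A b (x₀ + w)‖ := by
  simp only [IsResMinOn, SetLike.mem_coe, mem_mk', vsub_eq_sub, isMinOn_iff]
  refine and_congr_right fun _ => ⟨fun h w hw => h _ (by simpa using hw), fun h y hy => ?_⟩
  simpa using h _ hy

lemma ngObj_eq_norm_res (m : ℕ) (prev : ℕ → EuclideanSpace ℝ (Fin n)) (k : ℕ)
    (γ : Fin (m + 1) → ℝ) :
    ngObj A b m prev k γ = ‖res A b (fp A b (prev k) +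
      ∑ i : Fin (m + 1), γ i • (fp A b (prev k) - prev (k - (i : ℕ))))‖ := by
  simp only [ngObj, res_add, map_sum, map_smul, res_sub_res]

lemma NGMRESStep.isResMinOn {m k : ℕ} {prev : ℕ → EuclideanSpace ℝ (Fin n)}
    {next : EuclideanSpace ℝ (Fin n)} (h : NGMRESStep A b m prev k next) :
    IsResMinOn A b (mk' (fp A b (prev k))
      (span ℝ (range fun i : Fin (m + 1) => fp A b (prev k) - prev (k - (i : ℕ))))) next := by
  obtain ⟨β, hβ, rfl⟩ := h
  refine isResMinOn_mk'_iff.2 ⟨?_, fun w hw => ?_⟩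
  · simpa using sum_mem fun i _ => smul_mem _ (β i) (subset_span (mem_range_self i))
  · obtain ⟨γ, rfl⟩ := (mem_span_range_iff_exists_fun ℝ).1 hw
    simpa only [ngObj_eq_norm_res] using hβ γ

end Residual

lemma span_range_sub_eq_vectorSpan {k V : Type*} [Ring k] [AddCommGroup V] [Module k V] (x : V)
    (u : ℕ → V) (m : ℕ) :
    Submodule.span k (range fun i : Fin (m + 1) => x - u (m - (i : ℕ))) =
      vectorSpan k (insert x (u '' Iic m)) := by
  rw [vectorSpan_eq_span_vsub_set_left k (mem_insert x _), image_insert_eq, vsub_self,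
    Submodule.span_insert_zero]
  congr 1
  ext y
  constructor
  · rintro ⟨i, rfl⟩
    exact ⟨u (m - i), ⟨m - i, Nat.sub_le _ _, rfl⟩, rfl⟩
  · rintro ⟨_, ⟨j, hj, rfl⟩, rfl⟩
    exact ⟨⟨m - j, by omega⟩, by simp [Nat.sub_sub_self (mem_Iic.1 hj)]⟩

lemma vectorSpan_image_Iic_succ {K V : Type*} [Field K] [AddCommGroup V] [Module K V]
    {f : Module.End K V} {r : V} {u : ℕ → V} {k : ℕ}
    (hspan : vectorSpan K (u '' Iic k) = krylov f r k) (h : u (k + 1) - u 0 ∈ krylov f r (k + 1))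
    (h' : u (k + 1) - u 0 ∉ krylov f r k) :
    vectorSpan K (u '' Iic (k + 1)) = krylov f r (k + 1) := by
  rw [← Order.succ_eq_add_one, Order.Iic_succ, Order.succ_eq_add_one, image_insert_eq,
    vectorSpan_insert_of_mem (mem_image_of_mem u (mem_Iic.2 (Nat.zero_le k))), hspan, sup_comm,
    vsub_eq_sub, ← krylov_succ_eq_sup h h']

section Iteration

open Submodule AffineSubspace

variable {n p : ℕ} {A : Matrix (Fin n) (Fin n) ℝ} {b : EuclideanSpace ℝ (Fin n)}
  {u uG : ℕ → EuclideanSpace ℝ (Fin n)}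

lemma aNGMRES.eq_fp_of_not_dvd (hu : aNGMRES A b ⊤ p u) {k : ℕ} (hk : ¬p ∣ k + 1) :
    u (k + 1) = fp A b (u k) :=
  (hu (k + 1) (Nat.le_add_left 1 k)).1 hk

lemma aNGMRES.ngmresStep_of_dvd (hu : aNGMRES A b ⊤ p u) {k : ℕ} (hk : p ∣ k + 1) :
    NGMRESStep A b k u k (u (k + 1)) :=
  -- the window `(min ⊤ ((k + 1 : ℕ∞) - 1)).toNat` reduces to `k` definitionally
  (hu (k + 1) (Nat.le_add_left 1 k)).2 hk

lemma sub_notMem_of_lt_stagnation (hA : IsUnit A) {x₀ : EuclideanSpace ℝ (Fin n)}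
    {W : ℕ → Submodule ℝ (EuclideanSpace ℝ (Fin n))} (hW : Monotone W)
    (hG : ∀ k, IsResMinOn A b (mk' x₀ (W k)) (uG k)) {η : ℕ}
    (hη : IsLeast {ℓ | uG ℓ = uG (ℓ + 1)} η) {k : ℕ} (hk : k + 1 ≤ η) :
    uG (k + 1) - x₀ ∉ W k := by
  intro hmem
  have hsub : (mk' x₀ (W k) : Set (EuclideanSpace ℝ (Fin n))) ⊆ mk' x₀ (W (k + 1)) :=
    fun _ hy => mem_mk'.2 (hW k.le_succ (mem_mk'.1 hy))
  have heq : uG (k + 1) = uG k := IsResMinOn.eq hA (AffineSubspace.convex _)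
    ⟨mem_mk'.2 hmem, (hG (k + 1)).2.on_subset hsub⟩ (hG k)
  have := hη.2 heq.symm
  omega

local notation "𝒦" => krylov (toEuclideanLin A) (res A b (u 0))

lemma aNGMRES.eq_gmres_and_sub_mem_krylov_diff (hu : aNGMRES A b ⊤ p u) (hA : IsUnit A)
    (hG : ∀ k, IsResMinOn A b (mk' (u 0) (𝒦 k)) (uG k)) {k : ℕ}
    (hstag : uG (k + 1) - u 0 ∉ 𝒦 k) (hspan : vectorSpan ℝ (u '' Iic k) = 𝒦 k)
    (hr : res A b (u k) ∈ 𝒦 (k + 1)) (hr' : res A b (u k) ∉ 𝒦 k) :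
    (p ∣ k + 1 → u (k + 1) = uG (k + 1)) ∧
      u (k + 1) - u 0 ∈ 𝒦 (k + 1) ∧ u (k + 1) - u 0 ∉ 𝒦 k := by
  have hu₀ : u 0 ∈ u '' Iic k := mem_image_of_mem u (Nat.zero_le k)
  have huk : u k - u 0 ∈ 𝒦 k :=
    hspan ▸ vsub_mem_vectorSpan ℝ (mem_image_of_mem u (mem_Iic.2 le_rfl)) hu₀
  have hq : fp A b (u k) - u 0 = (u k - u 0) - res A b (u k) := by
    rw [fp_eq_sub_res]
    abel
  have hq_mem : fp A b (u k) - u 0 ∈ 𝒦 (k + 1) := hq ▸ sub_mem (krylov_mono k.le_succ huk) hr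
  have hq_notMem : fp A b (u k) - u 0 ∉ 𝒦 k := by rwa [hq, (𝒦 k).sub_mem_iff_right huk]
  by_cases hp : p ∣ k + 1
  · have hmin := (hu.ngmresStep_of_dvd hp).isResMinOn
    rw [span_range_sub_eq_vectorSpan, vectorSpan_insert_of_mem hu₀, hspan, sup_comm, vsub_eq_sub,
      ← krylov_succ_eq_sup hq_mem hq_notMem] at hmin
    have hmk : mk' (fp A b (u k)) (𝒦 (k + 1)) = mk' (u 0) (𝒦 (k + 1)) := by
      simpa only [direction_mk'] using mk'_eq (mem_mk'.2 hq_mem)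
    have heq : u (k + 1) = uG (k + 1) :=
      (hmk ▸ hmin).eq hA (AffineSubspace.convex _) (hG (k + 1))
    rw [heq]
    exact ⟨fun _ => rfl, isResMinOn_mk'_iff.1 (hG (k + 1)) |>.1, hstag⟩
  · rw [hu.eq_fp_of_not_dvd hp]
    exact ⟨fun h => absurd h hp, hq_mem, hq_notMem⟩

lemma res_mem_krylov_succ_succ {k : ℕ}
    (hk : (toEuclideanLin A ^ (k + 1)) (res A b (u 0)) ∉ 𝒦 (k + 1))
    {x : EuclideanSpace ℝ (Fin n)} (h : x - u 0 ∈ 𝒦 (k + 1)) (h' : x - u 0 ∉ 𝒦 k) :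
    res A b x ∈ 𝒦 (k + 2) ∧ res A b x ∉ 𝒦 (k + 1) := by
  have hres : res A b x = res A b (u 0) + toEuclideanLin A (x - u 0) := by
    rw [← res_add, add_sub_cancel]
  have hr₀ : res A b (u 0) ∈ 𝒦 (k + 1) := by
    simpa using pow_apply_mem_krylov (f := toEuclideanLin A) (r := res A b (u 0)) k.succ_pos
  rw [hres, (𝒦 (k + 1)).add_mem_iff_right hr₀]
  exact ⟨add_mem (krylov_mono (k + 1).le_succ hr₀) (apply_mem_krylov_succ h),
    apply_notMem_krylov_succ hk h h'⟩

theorem aNGMRES.krylov_invariant (hu : aNGMRES A b ⊤ p u) (hA : IsUnit A) (hG0 : uG 0 = u 0)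
    (hG : ∀ k, IsResMinOn A b (mk' (u 0) (𝒦 k)) (uG k)) {ν η : ℕ}
    (hgrade : ∀ l < ν, (toEuclideanLin A ^ l) (res A b (u 0)) ∉ 𝒦 l)
    (hη : IsLeast {ℓ | uG ℓ = uG (ℓ + 1)} η) :
    ∀ k ≤ ν, k ≤ η → vectorSpan ℝ (u '' Iic k) = 𝒦 k ∧ (p ∣ k → u k = uG k) ∧
      (k < ν → res A b (u k) ∈ 𝒦 (k + 1) ∧ res A b (u k) ∉ 𝒦 k)
  | 0, _, _ => by
    refine ⟨by rw [show Iic (0 : ℕ) = {0} from Iic_bot, image_singleton, vectorSpan_singleton,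
      krylov_zero], fun _ => hG0.symm, fun hν => ⟨?_, ?_⟩⟩
    · simpa using pow_apply_mem_krylov (f := toEuclideanLin A) (r := res A b (u 0)) zero_lt_one
    · simpa using hgrade 0 hν
  | k + 1, hkν, hkη => by
    obtain ⟨hspan, -, hres⟩ := hu.krylov_invariant hA hG0 hG hgrade hη k (by omega) (by omega)
    obtain ⟨hr, hr'⟩ := hres (by omega)
    obtain ⟨hdvd, hmem, hnotMem⟩ := hu.eq_gmres_and_sub_mem_krylov_diff hA hG
      (sub_notMem_of_lt_stagnation hA krylov_mono hG hη hkη) hspan hr hr'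
    exact ⟨vectorSpan_image_Iic_succ hspan hmem hnotMem, hdvd,
      fun hk => res_mem_krylov_succ_succ (hgrade _ hk) hmem hnotMem⟩

end Iteration

theorem stmt_11_general {n p : ℕ} (A : Matrix (Fin n) (Fin n) ℝ) (hA : IsUnit A)
    (b : EuclideanSpace ℝ (Fin n)) (u uG : ℕ → EuclideanSpace ℝ (Fin n))
    (hu : aNGMRES A b ⊤ p u) (hG0 : uG 0 = u 0)
    (hG : ∀ k : ℕ, (uG k - u 0) ∈ Krylov A (res A b (u 0)) k ∧
      ∀ w ∈ Krylov A (res A b (u 0)) k, ‖res A b (uG k)‖ ≤ ‖res A b (u 0 + w)‖)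
    (ν ηG jstar : ℕ)
    (hν : IsGreatest {ℓ : ℕ | Module.finrank ℝ (Krylov A (res A b (u 0)) ℓ) = ℓ} ν)
    (hη : IsLeast {ℓ : ℕ | uG ℓ = uG (ℓ+1)} ηG)
    (h1 : jstar * p ≤ ν) (h2 : jstar * p ≤ ηG) :
    ∀ j : ℕ, 1 ≤ j → j ≤ jstar → u (j * p) = uG (j * p) := by
  have hfinrank : Module.finrank ℝ (krylov (toEuclideanLin A) (res A b (u 0)) ν) = ν := by
    rw [← Krylov_eq_krylov]
    exact hν.1
  have hG' : ∀ k, IsResMinOn A b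
      (AffineSubspace.mk' (u 0) (krylov (toEuclideanLin A) (res A b (u 0)) k)) (uG k) :=
    fun k => isResMinOn_mk'_iff.2 (by rw [← Krylov_eq_krylov]; exact hG k)
  intro j _ hj
  have hjp : j * p ≤ jstar * p := Nat.mul_le_mul_right p hj
  exact (hu.krylov_invariant hA hG0 hG' (fun l hl => pow_apply_notMem_krylov hfinrank hl) hη
    (j * p) (hjp.trans h1) (hjp.trans h2)).2.1 (dvd_mul_left p j)

/-- aNGMRES(∞, p) and full GMRES coincide at iteration indices jp,
for j = 1, …, j*, whenever j*p ≤ ν(A, r₀) and j*p ≤ η^G. -/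
theorem stmt_11 {n p : ℕ} (hp : 1 ≤ p) (A : Matrix (Fin n) (Fin n) ℝ) (hA : IsUnit A)
    (b : EuclideanSpace ℝ (Fin n)) (u uG : ℕ → EuclideanSpace ℝ (Fin n))
    (hu : aNGMRES A b ⊤ p u) (hG0 : uG 0 = u 0)
    (hG : ∀ k : ℕ, (uG k - u 0) ∈ Krylov A (res A b (u 0)) k ∧
      ∀ w ∈ Krylov A (res A b (u 0)) k, ‖res A b (uG k)‖ ≤ ‖res A b (u 0 + w)‖)
    (ν ηG jstar : ℕ)
    (hν : IsGreatest {ℓ : ℕ | Module.finrank ℝ (Krylov A (res A b (u 0)) ℓ) = ℓ} ν)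
    (hη : IsLeast {ℓ : ℕ | uG ℓ = uG (ℓ+1)} ηG)
    (h1 : jstar * p ≤ ν) (h2 : jstar * p ≤ ηG) :
    ∀ j : ℕ, 1 ≤ j → j ≤ jstar → u (j * p) = uG (j * p) :=
  stmt_11_general A hA b u uG hu hG0 hG ν ηG jstar hν hη h1 h2
end
end
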